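/- arXiv:1807.02957 — 4 statements merged into one kernel-verified Lean document; each statement's English description precedes it below -/
import Mathlib

section
/- Let T : Set α → Set α be a monotone operator and γ : Set α → Set α a constraint satisfying premappability, i.e., γ(T(I)) = γ(T(γ(I))) for all I. Define T_γ(I) = γ(T(I)). Then for every natural number k, γ(T^{k}(∅)) = T_γ^{k}(∅), provided γ(∅) = ∅. -/
theorem premappability_iterate {α : Type*} (T γ : Set α → Set α)
    (hT : Monotone T) (hγ0 : γ ∅ = ∅)
    (hprem : ∀ I : Set α, γ (T I) = γ (T (γ I))) :
    ∀ k : ℕ, γ (T^[k] ∅) = (γ ∘ T)^[k] ∅ := by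
  intro k
  induction k with
  | zero => simpa using hγ0
  | succ k ih =>
    rw [Function.iterate_succ_apply', Function.iterate_succ_apply',
      hprem, ih]
    rfl
end

section
/- Let T : Set α → Set α be monotone, and let γ : Set α → Set α satisfy γ(∅) = ∅ and premappability ∀ I, γ(T(I)) = γ(T(γ(I))). If T reaches a fixpoint after n steps, i.e., T^{n+1}(∅) = T^{n}(∅), then γ(T^{n}(∅)) = T_γ^{n}(∅), where T_γ = γ ∘ T. -/
theorem premappability_fixpoint {α : Type*} (T γ : Set α → Set α)
    (hT : Monotone T) (hγ0 : γ ∅ = ∅)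
    (hprem : ∀ I : Set α, γ (T I) = γ (T (γ I)))
    (n : ℕ) (hfix : T^[n + 1] ∅ = T^[n] ∅) :
    γ (T^[n] ∅) = (γ ∘ T)^[n] ∅ := by
  have key : ∀ k, γ (T^[k] ∅) = (γ ∘ T)^[k] ∅ := by
    intro k
    induction k with
    | zero => simpa
    | succ k ih =>
      rw [Function.iterate_succ_apply', Function.iterate_succ_apply',
        Function.comp_apply, ← ih, ← hprem]
  exact key n
end

section
/- Let T : Set α → Set α be monotone with γ : Set α → Set α satisfying premappability ∀ I, γ(T(I)) = γ(T(γ(I))), γ(∅) = ∅, and suppose T^{n+1}(∅) = T^{n}(∅) for some n. Then T_γ^{n+1}(∅) = T_γ^{n}(∅), i.e., the constrained operator T_γ = γ ∘ T also reaches a fixpoint by step n+1. -/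
theorem constrained_operator_fixpoint {α : Type*} (T γ : Set α → Set α)
    (hT : Monotone T) (hγ0 : γ ∅ = ∅)
    (hprem : ∀ I : Set α, γ (T I) = γ (T (γ I)))
    (n : ℕ) (hfix : T^[n + 1] ∅ = T^[n] ∅) :
    (γ ∘ T)^[n + 1] ∅ = (γ ∘ T)^[n] ∅ := by
  have key : ∀ m : ℕ, (γ ∘ T)^[m] ∅ = γ (T^[m] ∅) := by
    intro m
    induction m with
    | zero => simp [hγ0]
    | succ k ih =>
      rw [Function.iterate_succ_apply', Function.iterate_succ_apply',
        Function.comp_apply, ih, ← hprem]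
  rw [key, key, hfix]
end

section
/- Semi-naïve soundness: let T(R) = arc ∪ (R ∘ arc) be the linear transitive-closure operator, and define the semi-naïve iteration by Δ₀ = arc, A₀ = arc, Δ_{k+1} = (Δ_k ∘ arc) \ A_k, A_{k+1} = A_k ∪ Δ_{k+1}. Then for all k, A_k = T^{k+1}(∅); hence the semi-naïve iteration computes the same sets as the naïve fixpoint iteration. -/
/-- Composition of a relation with the `arc` relation. -/
def relComp {α : Type*} (R arc : Set (α × α)) : Set (α × α) :=
  {p : α × α | ∃ z, (p.1, z) ∈ R ∧ (z, p.2) ∈ arc}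

/-- The immediate consequence operator for the linear transitive-closure program. -/
def tcOp {α : Type*} (arc : Set (α × α)) (R : Set (α × α)) : Set (α × α) :=
  arc ∪ relComp R arc

/-- The semi-naïve iteration: `(seminaive arc k).1 = Δ_k`, `(seminaive arc k).2 = A_k`. -/
def seminaive {α : Type*} (arc : Set (α × α)) : ℕ → Set (α × α) × Set (α × α)
  | 0 => (arc, arc)
  | k + 1 =>
    let d := (seminaive arc k).1
    let a := (seminaive arc k).2
    (relComp d arc \ a, a ∪ (relComp d arc \ a))

lemma relComp_union {α : Type*} (R S arc : Set (α × α)) :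
    relComp (R ∪ S) arc = relComp R arc ∪ relComp S arc := by
  ext p; simp only [relComp, Set.mem_setOf_eq, Set.mem_union]
  constructor
  · rintro ⟨z, h | h, hz⟩
    exacts [Or.inl ⟨z, h, hz⟩, Or.inr ⟨z, h, hz⟩]
  · rintro (⟨z, h, hz⟩ | ⟨z, h, hz⟩)
    exacts [⟨z, Or.inl h, hz⟩, ⟨z, Or.inr h, hz⟩]

lemma relComp_empty {α : Type*} (arc : Set (α × α)) : relComp ∅ arc = ∅ := by
  ext p; simp [relComp]

lemma seminaive_aux {α : Type*} (arc : Set (α × α)) :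
    ∀ k : ℕ, (seminaive arc k).2 = (tcOp arc)^[k + 1] ∅ ∧
      (seminaive arc (k + 1)).2 = tcOp arc (seminaive arc k).2 := by
  intro k
  induction k with
  | zero =>
    constructor
    · simp [seminaive, tcOp, relComp_empty]
    · show arc ∪ (relComp arc arc \ arc) = arc ∪ relComp arc arc
      rw [Set.union_diff_self]
  | succ k ih =>
    obtain ⟨h1, h2⟩ := ih
    have h3 : (seminaive arc (k + 1)).2 = (tcOp arc)^[k + 2] ∅ := by
      rw [h2, h1, ← Function.iterate_succ_apply' (tcOp arc) (k+1)]
    refine ⟨h3, ?_⟩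
    show (seminaive arc (k+1)).2 ∪ (relComp (seminaive arc (k+1)).1 arc \ (seminaive arc (k+1)).2)
        = tcOp arc (seminaive arc (k+1)).2
    have hA : (seminaive arc (k+1)).2 = (seminaive arc k).2 ∪ (seminaive arc (k+1)).1 := rfl
    rw [Set.union_diff_self]
    conv_rhs => rw [hA]
    rw [tcOp, relComp_union, ← Set.union_assoc, ← tcOp, ← h2]

theorem seminaive_sound {α : Type*} (arc : Set (α × α)) :
    ∀ k : ℕ, (seminaive arc k).2 = (tcOp arc)^[k + 1] ∅ :=
  fun k => (seminaive_aux arc k).1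
end
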